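/- For any coupling M of p and q, the Shannon entropy of M satisfies H(M) ≥ H(p ∧ q), where p ∧ q is the greatest lower bound of p and q in the majorization lattice. -/

import Mathlib

open Finset

/-- Majorization via prefix sums (vectors as functions ℕ → ℝ, padded with zeros). -/
def Maj (p q : ℕ → ℝ) : Prop :=
  ∀ i : ℕ, ∑ k ∈ Finset.range i, p k ≤ ∑ k ∈ Finset.range i, q k

/-- A probability vector of length `n`, sorted non-increasingly, zero beyond `n`. -/
def IsProbVec (n : ℕ) (p : ℕ → ℝ) : Prop :=
  (∀ i, 0 ≤ p i) ∧ (∀ i j : ℕ, i ≤ j → p j ≤ p i) ∧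
  (∑ k ∈ Finset.range n, p k = 1) ∧ (∀ i, n ≤ i → p i = 0)

/-- The greatest lower bound `p ∧ q` in the majorization lattice. -/
noncomputable def meet (p q : ℕ → ℝ) : ℕ → ℝ := fun i =>
  min (∑ k ∈ Finset.range (i + 1), p k) (∑ k ∈ Finset.range (i + 1), q k) -
  min (∑ k ∈ Finset.range i, p k) (∑ k ∈ Finset.range i, q k)

/-- Shannon entropy (base 2) of the first `n` components. -/
noncomputable def H2 (n : ℕ) (p : ℕ → ℝ) : ℝ :=
  ∑ k ∈ Finset.range n, -(p k * Real.logb 2 (p k))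

/-- Shannon entropy (base 2) of the entries of an `n × m` matrix. -/
noncomputable def Hmat (n m : ℕ) (M : ℕ → ℕ → ℝ) : ℝ :=
  ∑ i ∈ Finset.range n, ∑ j ∈ Finset.range m, -(M i j * Real.logb 2 (M i j))

/-- `M` is a coupling of `p` and `q`: nonnegative, row sums `p`, column sums `q`. -/
def IsCoupling (n m : ℕ) (p q : ℕ → ℝ) (M : ℕ → ℕ → ℝ) : Prop :=
  (∀ i j, 0 ≤ M i j) ∧ (∀ i < n, ∑ j ∈ Finset.range m, M i j = p i) ∧
  (∀ j < m, ∑ i ∈ Finset.range n, M i j = q j)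

/-- The `half` operator: duplicates and halves each component. -/
noncomputable def half (p : ℕ → ℝ) : ℕ → ℝ := fun i => p (i / 2) / 2

/-- Iterated `half` operator. -/
noncomputable def halfIter : ℕ → (ℕ → ℝ) → (ℕ → ℝ)
  | 0, p => p
  | (i + 1), p => half (halfIter i p)

/-- Iterated majorization meet of `p 0, p 1, …, p k`. -/
noncomputable def bigMeet (p : ℕ → ℕ → ℝ) : ℕ → (ℕ → ℝ)
  | 0 => p 0
  | (k + 1) => meet (bigMeet p k) (p (k + 1))

/-!
List the `n * m` entries of `M` in decreasing order as `y`. Any `k` entries of `M` lie in at most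
`k` rows, so, `p` being sorted, they sum to at most `p 0 + ⋯ + p (k - 1)`; likewise for columns
and `q`. Hence every prefix sum of `y` is at most the minimum of the prefix sums of `p` and `q`,
which is the prefix sum of `p ∧ q`, and the totals agree: `y ⪯ p ∧ q`.

Schur-concavity of entropy: compare `negMulLog` with its tangent lines at the entries of `y`, whose
slopes `-log y k - 1` increase with `k`, and sum by parts against the nonnegative prefix sums of
`p ∧ q - y`. A zero entry of `y` forces the remaining entries of `p ∧ q` to vanish, so the zero
tail of `y` can be dropped first.
-/

open Real

lemma Real.negMulLog_le_tangent {y z : ℝ} (hy : 0 < y) (hz : 0 ≤ z) :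
    negMulLog z ≤ negMulLog y + (-log y - 1) * (z - y) := by
  rcases hz.eq_or_lt with rfl | hz
  · simp only [negMulLog]
    nlinarith
  · have h := mul_le_mul_of_nonneg_left (log_le_sub_one_of_pos (div_pos hy hz)) hz.le
    rw [log_div hy.ne' hz.ne', mul_sub_one, mul_div_cancel₀ _ hz.ne'] at h
    simp only [negMulLog]
    linear_combination h

lemma sum_range_mul_nonpos_of_monotoneOn {N : ℕ} {d a : ℕ → ℝ} (hd : MonotoneOn d (Set.Iio N))
    (ha : ∀ k ≤ N, 0 ≤ ∑ i ∈ range k, a i) (hN : ∑ i ∈ range N, a i = 0) :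
    ∑ k ∈ range N, d k * a k ≤ 0 := by
  have h := sum_range_by_parts d a N
  simp only [smul_eq_mul] at h
  rw [h, hN, mul_zero, zero_sub, neg_nonpos]
  refine sum_nonneg fun k hk => mul_nonneg ?_ (ha _ ?_)
  · have hk : k + 1 < N := by grind
    exact sub_nonneg.2 (hd (Set.mem_Iio.2 (by omega)) (Set.mem_Iio.2 hk) k.le_succ)
  · grind

lemma sum_negMulLog_le_of_sum_range_le_of_pos {N : ℕ} {y z : ℕ → ℝ} (hy : Antitone y)
    (hy_pos : ∀ k < N, 0 < y k) (hz : ∀ k, 0 ≤ z k)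
    (hle : ∀ k ≤ N, ∑ i ∈ range k, y i ≤ ∑ i ∈ range k, z i)
    (heq : ∑ i ∈ range N, y i = ∑ i ∈ range N, z i) :
    ∑ k ∈ range N, negMulLog (z k) ≤ ∑ k ∈ range N, negMulLog (y k) := by
  set d : ℕ → ℝ := fun k => -log (y k) - 1
  have hd : MonotoneOn d (Set.Iio N) := fun j _ k hk hjk => by
    have := log_le_log (hy_pos k hk) (hy hjk)
    simp only [d]
    linarith
  have hsum : ∑ k ∈ range N, d k * (z k - y k) ≤ 0 :=
    sum_range_mul_nonpos_of_monotoneOn hd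
      (fun k hk => by rw [sum_sub_distrib]; linarith [hle k hk])
      (by rw [sum_sub_distrib, heq, sub_self])
  calc ∑ k ∈ range N, negMulLog (z k)
      ≤ ∑ k ∈ range N, (negMulLog (y k) + d k * (z k - y k)) :=
        sum_le_sum fun k hk => negMulLog_le_tangent (hy_pos k (mem_range.1 hk)) (hz k)
    _ = ∑ k ∈ range N, negMulLog (y k) + ∑ k ∈ range N, d k * (z k - y k) := sum_add_distrib
    _ ≤ ∑ k ∈ range N, negMulLog (y k) := add_le_of_nonpos_right hsum

theorem sum_negMulLog_le_of_sum_range_le {N : ℕ} {y z : ℕ → ℝ} (hy : Antitone y)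
    (hy0 : ∀ k, 0 ≤ y k) (hz : ∀ k, 0 ≤ z k)
    (hle : ∀ k ≤ N, ∑ i ∈ range k, y i ≤ ∑ i ∈ range k, z i)
    (heq : ∑ i ∈ range N, y i = ∑ i ∈ range N, z i) :
    ∑ k ∈ range N, negMulLog (z k) ≤ ∑ k ∈ range N, negMulLog (y k) := by
  induction N with
  | zero => simp
  | succ N ih =>
    rcases (hy0 N).eq_or_lt with hyN | hyN
    · rw [sum_range_succ, sum_range_succ, ← hyN] at heq
      have hzN : z N = 0 := le_antisymm (by linarith [hle N N.le_succ]) (hz N)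
      rw [sum_range_succ, sum_range_succ, hzN, ← hyN, negMulLog_zero, add_zero, add_zero]
      exact ih (fun k hk => hle k (by omega)) (by linarith)
    · exact sum_negMulLog_le_of_sum_range_le_of_pos hy
        (fun k hk => hyN.trans_le (hy (by omega))) hz hle heq

lemma Antitone.sum_le_sum_range_card {p : ℕ → ℝ} (hp : Antitone p) (I : Finset ℕ) :
    ∑ i ∈ I, p i ≤ ∑ i ∈ range #I, p i := by
  set k := #I
  -- `I` has as many elements `≥ k` as `range k` has elements `< k` missing from `I`.
  have hcard : #(I \ range k) = #(range k \ I) := card_sdiff_comm (card_range k).symm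
  have hout : ∑ i ∈ I \ range k, p i ≤ #(I \ range k) • p k :=
    sum_le_card_nsmul _ _ _ fun i hi => hp (by simpa using (mem_sdiff.1 hi).2)
  have hin : #(range k \ I) • p k ≤ ∑ i ∈ range k \ I, p i :=
    card_nsmul_le_sum _ _ _ fun i hi => hp (mem_range.1 (mem_sdiff.1 hi).1).le
  rw [← sum_inter_add_sum_sdiff I (range k), ← sum_inter_add_sum_sdiff (range k) I, inter_comm]
  linarith [hcard ▸ hout]

section Coupling

variable {n m : ℕ} {M : ℕ → ℕ → ℝ} {s : Finset (ℕ × ℕ)}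

lemma sum_le_sum_range_card_of_rowSums {p : ℕ → ℝ} (hM : ∀ i j, 0 ≤ M i j)
    (hrow : ∀ i < n, ∑ j ∈ range m, M i j = p i) (hp0 : ∀ i, 0 ≤ p i) (hp : Antitone p)
    (hs : s ⊆ range n ×ˢ range m) :
    ∑ x ∈ s, M x.1 x.2 ≤ ∑ i ∈ range #s, p i := by
  classical
  set I := s.image Prod.fst
  calc ∑ x ∈ s, M x.1 x.2 ≤ ∑ x ∈ I ×ˢ range m, M x.1 x.2 :=
        sum_le_sum_of_subset_of_nonneg
          (fun x hx => mem_product.2 ⟨mem_image_of_mem _ hx, (mem_product.1 (hs hx)).2⟩)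
          fun x _ _ => hM _ _
    _ = ∑ i ∈ I, p i := by
        rw [sum_product]
        refine sum_congr rfl fun i hi => hrow i ?_
        obtain ⟨x, hx, rfl⟩ := mem_image.1 hi
        exact mem_range.1 (mem_product.1 (hs hx)).1
    _ ≤ ∑ i ∈ range #I, p i := hp.sum_le_sum_range_card I
    _ ≤ ∑ i ∈ range #s, p i :=
        sum_le_sum_of_subset_of_nonneg (range_subset_range.2 card_image_le) fun i _ _ => hp0 i

lemma sum_le_sum_range_card_of_colSums {q : ℕ → ℝ} (hM : ∀ i j, 0 ≤ M i j)
    (hcol : ∀ j < m, ∑ i ∈ range n, M i j = q j) (hq0 : ∀ j, 0 ≤ q j) (hq : Antitone q)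
    (hs : s ⊆ range n ×ˢ range m) :
    ∑ x ∈ s, M x.1 x.2 ≤ ∑ j ∈ range #s, q j := by
  have hswap : s.image Prod.swap ⊆ range m ×ˢ range n := by
    intro x hx
    obtain ⟨y, hy, rfl⟩ := mem_image.1 hx
    exact mem_product.2 (mem_product.1 (hs hy)).symm
  have h := sum_le_sum_range_card_of_rowSums (M := fun j i => M i j) (fun j i => hM i j)
    hcol hq0 hq hswap
  rwa [sum_image Prod.swap_injective.injOn, card_image_of_injective _ Prod.swap_injective] at h

end Coupling

section DecreasingRearrangement

variable {α : Type*} (S : Finset α) (f : α → ℝ)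

noncomputable def antitoneEnum : Fin #S ≃ S :=
  (Tuple.sort fun i => -f (S.equivFin.symm i)).trans S.equivFin.symm

lemma antitone_antitoneEnum : Antitone fun i => f (antitoneEnum S f i) :=
  fun _ _ hij => by
    simpa [antitoneEnum] using Tuple.monotone_sort (fun i => -f (S.equivFin.symm i)) hij

noncomputable def decreasingRearrangement (k : ℕ) : ℝ :=
  if h : k < #S then f (antitoneEnum S f ⟨k, h⟩) else 0

variable {S f}

lemma decreasingRearrangement_nonneg (hf : ∀ a ∈ S, 0 ≤ f a) (k : ℕ) :
    0 ≤ decreasingRearrangement S f k := by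
  unfold decreasingRearrangement
  split_ifs
  exacts [hf _ (coe_mem _), le_rfl]

lemma decreasingRearrangement_antitone (hf : ∀ a ∈ S, 0 ≤ f a) :
    Antitone (decreasingRearrangement S f) := by
  intro j k hjk
  by_cases hk : k < #S
  · simp only [decreasingRearrangement, hk, lt_of_le_of_lt hjk hk, dite_true]
    exact antitone_antitoneEnum S f (Fin.mk_le_mk.2 hjk)
  · simpa [decreasingRearrangement, hk] using decreasingRearrangement_nonneg hf j

variable (S f)

lemma sum_range_card_decreasingRearrangement (g : ℝ → ℝ) :
    ∑ k ∈ range #S, g (decreasingRearrangement S f k) = ∑ a ∈ S, g (f a) := by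
  rw [← Fin.sum_univ_eq_sum_range, ← sum_coe_sort S]
  exact Fintype.sum_equiv (antitoneEnum S f) _ _ fun i => by simp [decreasingRearrangement]

lemma exists_subset_sum_range_decreasingRearrangement {k : ℕ} (hk : k ≤ #S) :
    ∃ s ⊆ S, #s = k ∧ ∑ i ∈ range k, decreasingRearrangement S f i = ∑ a ∈ s, f a := by
  let e : Fin k ↪ α := ⟨fun i => antitoneEnum S f (Fin.castLE hk i),
    Subtype.val_injective.comp ((antitoneEnum S f).injective.comp (Fin.castLE_injective hk))⟩
  refine ⟨univ.map e, fun a ha => ?_, by simp, ?_⟩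
  · obtain ⟨i, -, rfl⟩ := mem_map.1 ha
    exact coe_mem _
  · rw [sum_map, ← Fin.sum_univ_eq_sum_range]
    exact sum_congr rfl fun i _ => dif_pos (i.isLt.trans_le hk)

end DecreasingRearrangement

lemma sum_range_meet (p q : ℕ → ℝ) (k : ℕ) :
    ∑ i ∈ range k, meet p q i = min (∑ i ∈ range k, p i) (∑ i ∈ range k, q i) := by
  simpa [meet] using sum_range_sub (fun i => min (∑ j ∈ range i, p j) (∑ j ∈ range i, q j)) k

lemma meet_nonneg {p q : ℕ → ℝ} (hp : ∀ i, 0 ≤ p i) (hq : ∀ i, 0 ≤ q i) (k : ℕ) :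
    0 ≤ meet p q k :=
  sub_nonneg.2 (min_le_min (by simpa [sum_range_succ] using hp k)
    (by simpa [sum_range_succ] using hq k))

namespace IsProbVec

variable {n : ℕ} {p : ℕ → ℝ}

lemma nonneg (hp : IsProbVec n p) (i : ℕ) : 0 ≤ p i := hp.1 i

lemma antitone (hp : IsProbVec n p) : Antitone p := fun i j => hp.2.1 i j

lemma sum_range_of_le (hp : IsProbVec n p) {k : ℕ} (hk : n ≤ k) : ∑ i ∈ range k, p i = 1 := by
  rw [← hp.2.2.1]
  exact (sum_subset (range_subset_range.2 hk) fun i _ hi => hp.2.2.2 i (by simpa using hi)).symm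

lemma length_pos (hp : IsProbVec n p) : 0 < n := by
  by_contra! h
  simpa [Nat.le_zero.1 h] using hp.2.2.1

end IsProbVec

lemma neg_mul_logb_two (a : ℝ) : -(a * logb 2 a) = negMulLog a / log 2 := by
  simp only [logb, negMulLog]
  ring

lemma H2_eq_sum_negMulLog (n : ℕ) (p : ℕ → ℝ) :
    H2 n p = (∑ k ∈ range n, negMulLog (p k)) / log 2 := by
  simp only [H2, neg_mul_logb_two, sum_div]

lemma Hmat_eq_sum_negMulLog (n m : ℕ) (M : ℕ → ℕ → ℝ) :
    Hmat n m M = (∑ x ∈ range n ×ˢ range m, negMulLog (M x.1 x.2)) / log 2 := by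
  simp only [Hmat, neg_mul_logb_two, sum_div, sum_product]

theorem stmt2 (n m : ℕ) (p q : ℕ → ℝ) (hp : IsProbVec n p) (hq : IsProbVec m q)
    (M : ℕ → ℕ → ℝ) (hM : IsCoupling n m p q M) :
    H2 (n * m) (meet p q) ≤ Hmat n m M := by
  obtain ⟨hM0, hrow, hcol⟩ := hM
  set S := range n ×ˢ range m
  set f : ℕ × ℕ → ℝ := fun x => M x.1 x.2
  have hf : ∀ x ∈ S, 0 ≤ f x := fun x _ => hM0 _ _
  have hS : #S = n * m := by simp [S]
  have hprefix : ∀ k ≤ n * m, ∑ i ∈ range k, decreasingRearrangement S f i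
      ≤ ∑ i ∈ range k, meet p q i := by
    intro k hk
    obtain ⟨s, hsS, rfl, hs⟩ := exists_subset_sum_range_decreasingRearrangement S f (hS ▸ hk)
    rw [hs, sum_range_meet]
    exact le_min (sum_le_sum_range_card_of_rowSums hM0 hrow hp.nonneg hp.antitone hsS)
      (sum_le_sum_range_card_of_colSums hM0 hcol hq.nonneg hq.antitone hsS)
  have htotal : ∑ i ∈ range (n * m), decreasingRearrangement S f i
      = ∑ i ∈ range (n * m), meet p q i := by
    rw [sum_range_meet, hp.sum_range_of_le (Nat.le_mul_of_pos_right n hq.length_pos),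
      hq.sum_range_of_le (Nat.le_mul_of_pos_left m hp.length_pos), min_self, ← hS,
      sum_range_card_decreasingRearrangement S f fun x => x, sum_product]
    exact (sum_congr rfl fun i hi => hrow i (mem_range.1 hi)).trans (hp.sum_range_of_le le_rfl)
  have hentropy := sum_negMulLog_le_of_sum_range_le (decreasingRearrangement_antitone hf)
    (decreasingRearrangement_nonneg hf) (meet_nonneg hp.nonneg hq.nonneg) hprefix htotal
  rw [H2_eq_sum_negMulLog, Hmat_eq_sum_negMulLog,
    ← sum_range_card_decreasingRearrangement S f negMulLog, hS]
  exact div_le_div_of_nonneg_right hentropy (log_pos one_lt_two).le
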